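/- Let X be an m×m real symmetric matrix with eigenvalues λ₁ ≥ ⋯ ≥ λ_m, written as X = X₁ + X₂ with X₁ = U^T diag(λ₁,0,...,0) U for the orthogonalizing matrix U with first row u. Define λ₁*(M) = sqrt((λ₁(M)² + Tr(M²))/2). Then for every β ⊆ {1,...,m}, |λ₁*(X_β) - |λ₁| ∑_{k∈β} u_k²| ≤ sqrt(∑_{i=2}^m λ_i²). -/

import Mathlib

open Matrix

/-- The largest eigenvalue of a Hermitian real matrix. -/
noncomputable def lambdaMax {n : Type*} [Fintype n] [DecidableEq n]
    {A : Matrix n n ℝ} (hA : A.IsHermitian) : ℝ :=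
  ⨆ i, hA.eigenvalues i

/-- `λ₁*(A) = sqrt((λ₁(A)² + Tr(A²))/2)`. -/
noncomputable def lambdaStar {n : Type*} [Fintype n] [DecidableEq n]
    {A : Matrix n n ℝ} (hA : A.IsHermitian) : ℝ :=
  Real.sqrt ((lambdaMax hA ^ 2 + Matrix.trace (A * A)) / 2)

/-!
For symmetric `A`, `Tr(A²) = ‖A‖²` (Frobenius norm), so `λ*(A) = ‖(λmax A, ‖A‖)‖₂ / √2`. Both
`λmax` (Weyl's inequality, via Rayleigh quotients) and `‖·‖` are 1-Lipschitz for the Frobenius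
norm, hence so is `λ*`. Write `X = X₁ + X₂` with `X₁ = λ₁ u uᵀ`, `u` the first row of `U`. Passing
to the principal submatrix on `β` does not increase the Frobenius norm, and `‖X₂‖² = ∑_{i≥2} λᵢ²`
by orthogonal invariance. The restriction of `X₁` is `λ₁ w wᵀ` with `‖w‖² = ∑_{k∈β} u_k²`; its
`λ*` is at most `‖λ₁ w wᵀ‖ = |λ₁| ‖w‖²`, with equality when `λ₁ ≥ 0` or `|β| ≤ 1`. In the remaining
case `λ₁ < 0`, `m ≥ 2`, the ordering gives `|λ₁| ∑_{k∈β} u_k² ≤ |λ₁| ≤ |λ₂| ≤ √(∑_{i≥2} λᵢ²)`,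
which is enough for the lower bound because `λ* ≥ 0`.
-/

attribute [local instance] Matrix.frobeniusNormedAddCommGroup Matrix.frobeniusNormedSpace

theorem Finset.sum_comp_le_univ_sum_of_injective {ι κ N : Type*} [Fintype ι] [Fintype κ]
    [AddCommMonoid N] [Preorder N] [AddLeftMono N] {f : ι → κ} (hf : Function.Injective f)
    {g : κ → N} (hg : ∀ k, 0 ≤ g k) : ∑ i, g (f i) ≤ ∑ k, g k := by
  classical
  rw [← Finset.sum_image fun x _ y _ h => hf h]
  exact Finset.sum_le_univ_sum_of_nonneg hg

theorem Real.sqrt_half_sq_add_sq_le_add {a b c d t : ℝ} (hac : |a - c| ≤ t) (hbd : |b - d| ≤ t) :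
    √((a ^ 2 + b ^ 2) / 2) ≤ √((c ^ 2 + d ^ 2) / 2) + t := by
  set S := √((c ^ 2 + d ^ 2) / 2)
  have hS : S ^ 2 = (c ^ 2 + d ^ 2) / 2 := Real.sq_sqrt (by positivity)
  have ht : 0 ≤ t := (abs_nonneg _).trans hac
  have hcd : |c| + |d| ≤ 2 * S :=
    (le_abs_self _).trans <| abs_le_of_sq_le_sq
      (by nlinarith [sq_abs c, sq_abs d, sq_nonneg (|c| - |d|)]) (by positivity)
  have ha : a ^ 2 ≤ (|c| + t) ^ 2 :=
    sq_le_sq.mpr ((by linarith [abs_sub_abs_le_abs_sub a c] : |a| ≤ |c| + t).trans (le_abs_self _))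
  have hb : b ^ 2 ≤ (|d| + t) ^ 2 :=
    sq_le_sq.mpr ((by linarith [abs_sub_abs_le_abs_sub b d] : |b| ≤ |d| + t).trans (le_abs_self _))
  rw [Real.sqrt_le_iff]
  refine ⟨by positivity, ?_⟩
  nlinarith [sq_abs c, sq_abs d, mul_le_mul_of_nonneg_left hcd ht]

theorem Real.abs_sqrt_half_sq_add_sq_sub_le {a b c d t : ℝ} (hac : |a - c| ≤ t)
    (hbd : |b - d| ≤ t) : |√((a ^ 2 + b ^ 2) / 2) - √((c ^ 2 + d ^ 2) / 2)| ≤ t := by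
  rw [abs_sub_le_iff]
  constructor
  · linarith [Real.sqrt_half_sq_add_sq_le_add hac hbd]
  · rw [abs_sub_comm] at hac hbd
    linarith [Real.sqrt_half_sq_add_sq_le_add hac hbd]

theorem abs_le_sqrt_sum_sq_Ioi_of_neg {ι : Type*} [Preorder ι] [LocallyFiniteOrderTop ι]
    {f : ι → ℝ} {i j : ι} (hij : i < j) (hji : f j ≤ f i) (hi : f i < 0) :
    |f i| ≤ √(∑ k ∈ Finset.Ioi i, f k ^ 2) := by
  have hfj : |f i| ≤ |f j| := by
    rw [abs_of_neg hi, abs_of_neg (hji.trans_lt hi)]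
    linarith
  exact hfj.trans <| Real.abs_le_sqrt <|
    Finset.single_le_sum (f := fun k => f k ^ 2) (fun k _ => sq_nonneg _) (Finset.mem_Ioi.mpr hij)

namespace Matrix

section Frobenius

variable {ι κ m n : Type*} [Fintype ι] [Fintype κ] [Fintype m] [Fintype n]

theorem frobenius_norm_sq_eq_sum (A : Matrix m n ℝ) : ‖A‖ ^ 2 = ∑ i, ∑ j, A i j ^ 2 := by
  rw [frobenius_norm_def, ← Real.sqrt_eq_rpow, Real.sq_sqrt (by positivity)]
  simp

theorem frobenius_norm_sq_eq_trace (A : Matrix n n ℝ) : ‖A‖ ^ 2 = trace (Aᵀ * A) := by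
  rw [frobenius_norm_sq_eq_sum, Finset.sum_comm]
  simp [trace, mul_apply, sq]

theorem IsHermitian.trace_mul_self {A : Matrix n n ℝ} (hA : A.IsHermitian) :
    trace (A * A) = ‖A‖ ^ 2 := by
  rw [frobenius_norm_sq_eq_trace, (isHermitian_iff_isSymm.mp hA).eq]

theorem frobenius_norm_transpose_mul_mul [DecidableEq n] {U : Matrix n n ℝ} (hU : Uᵀ * U = 1)
    (A : Matrix n n ℝ) : ‖Uᵀ * A * U‖ = ‖A‖ := by
  have hU' : U * Uᵀ = 1 := mul_eq_one_comm.mp hU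
  rw [← sq_eq_sq₀ (norm_nonneg _) (norm_nonneg _), frobenius_norm_sq_eq_trace,
    frobenius_norm_sq_eq_trace, transpose_mul, transpose_mul, transpose_transpose]
  calc trace (Uᵀ * (Aᵀ * U) * (Uᵀ * A * U)) = trace (Uᵀ * (Aᵀ * A * U)) := by
        simp only [Matrix.mul_assoc, ← Matrix.mul_assoc U Uᵀ, hU', Matrix.one_mul]
    _ = trace (Aᵀ * A) := by
        rw [trace_mul_comm, Matrix.mul_assoc, hU', Matrix.mul_one]

theorem frobenius_norm_submatrix_le (A : Matrix m n ℝ) {f : ι → m} {g : κ → n}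
    (hf : Function.Injective f) (hg : Function.Injective g) : ‖A.submatrix f g‖ ≤ ‖A‖ := by
  rw [← sq_le_sq₀ (norm_nonneg _) (norm_nonneg _), frobenius_norm_sq_eq_sum,
    frobenius_norm_sq_eq_sum]
  refine (Finset.sum_le_sum fun i _ => ?_).trans
    (Finset.sum_comp_le_univ_sum_of_injective hf fun k => by positivity)
  exact Finset.sum_comp_le_univ_sum_of_injective hg fun k => sq_nonneg _

theorem frobenius_norm_vecMulVec_self (w : n → ℝ) : ‖vecMulVec w w‖ = w ⬝ᵥ w := by
  rw [← sq_eq_sq₀ (norm_nonneg _) (by simpa using dotProduct_self_star_nonneg w),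
    frobenius_norm_sq_eq_sum, dotProduct, sq, Finset.sum_mul_sum]
  exact Finset.sum_congr rfl fun i _ => Finset.sum_congr rfl fun j _ => by
    rw [vecMulVec_apply]; ring

theorem abs_sum_sum_mul_le_norm_mul_norm (A B : Matrix m n ℝ) :
    |∑ i, ∑ j, A i j * B i j| ≤ ‖A‖ * ‖B‖ := by
  refine abs_le_of_sq_le_sq ?_ (by positivity)
  rw [mul_pow, frobenius_norm_sq_eq_sum, frobenius_norm_sq_eq_sum]
  simp only [← Fintype.sum_prod_type']
  exact Finset.sum_mul_sq_le_sq_mul_sq _ _ _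

theorem abs_dotProduct_mulVec_le (A : Matrix n n ℝ) (v : n → ℝ) :
    |v ⬝ᵥ A *ᵥ v| ≤ ‖A‖ * (v ⬝ᵥ v) := by
  rw [← frobenius_norm_vecMulVec_self]
  convert abs_sum_sum_mul_le_norm_mul_norm A (vecMulVec v v) using 2
  simp only [dotProduct, mulVec, vecMulVec_apply, Finset.mul_sum]
  exact Finset.sum_congr rfl fun i _ => Finset.sum_congr rfl fun j _ => by ring

end Frobenius

namespace IsHermitian

variable {n : Type*} [Fintype n] [DecidableEq n] {A B : Matrix n n ℝ}

theorem eigenvalues_le_lambdaMax (hA : A.IsHermitian) (i : n) :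
    hA.eigenvalues i ≤ lambdaMax hA :=
  le_ciSup (Set.finite_range _).bddAbove i

open scoped MatrixOrder in
theorem le_algebraMap_lambdaMax (hA : A.IsHermitian) :
    A ≤ algebraMap ℝ (Matrix n n ℝ) (lambdaMax hA) := by
  refine le_algebraMap_of_spectrum_le (fun x hx => ?_) hA
  obtain ⟨i, rfl⟩ := hA.spectrum_real_eq_range_eigenvalues ▸ hx
  exact hA.eigenvalues_le_lambdaMax i

theorem dotProduct_mulVec_le_lambdaMax (hA : A.IsHermitian) (v : n → ℝ) :
    v ⬝ᵥ A *ᵥ v ≤ lambdaMax hA * (v ⬝ᵥ v) := by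
  have := (le_iff.mp hA.le_algebraMap_lambdaMax).dotProduct_mulVec_nonneg v
  rwa [star_trivial, sub_mulVec, dotProduct_sub, Algebra.algebraMap_eq_smul_one, smul_mulVec,
    one_mulVec, dotProduct_smul, smul_eq_mul, sub_nonneg] at this

theorem exists_dotProduct_mulVec_eq_lambdaMax [Nonempty n] (hA : A.IsHermitian) :
    ∃ v : n → ℝ, v ⬝ᵥ v = 1 ∧ v ⬝ᵥ A *ᵥ v = lambdaMax hA := by
  obtain ⟨i, hi⟩ := Finite.exists_max hA.eigenvalues
  have hunit : hA.eigenvectorBasis i ⬝ᵥ hA.eigenvectorBasis i = 1 := by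
    have := real_inner_self_eq_norm_sq (hA.eigenvectorBasis i)
    rw [hA.eigenvectorBasis.orthonormal.1 i, EuclideanSpace.inner_eq_star_dotProduct] at this
    simpa using this
  refine ⟨hA.eigenvectorBasis i, hunit, ?_⟩
  rw [hA.mulVec_eigenvectorBasis, dotProduct_smul, hunit, smul_eq_mul, mul_one]
  exact le_antisymm (hA.eigenvalues_le_lambdaMax i) (ciSup_le hi)

theorem lambdaMax_of_subsingleton [Subsingleton n] (hA : A.IsHermitian) :
    lambdaMax hA = trace A := by
  rw [hA.trace_eq_sum_eigenvalues]
  cases isEmpty_or_nonempty n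
  · simp [lambdaMax]
  · inhabit n
    have : Unique n := Unique.mk' n
    simp [lambdaMax]

theorem abs_lambdaMax_le (hA : A.IsHermitian) : |lambdaMax hA| ≤ ‖A‖ := by
  cases isEmpty_or_nonempty n
  · simp [lambdaMax]
  · obtain ⟨v, hv, hAv⟩ := hA.exists_dotProduct_mulVec_eq_lambdaMax
    simpa [hAv, hv] using abs_dotProduct_mulVec_le A v

theorem lambdaMax_le_add (hA : A.IsHermitian) (hB : B.IsHermitian) :
    lambdaMax hA ≤ lambdaMax hB + ‖A - B‖ := by
  cases isEmpty_or_nonempty n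
  · simp [lambdaMax]
  · obtain ⟨v, hv, hAv⟩ := hA.exists_dotProduct_mulVec_eq_lambdaMax
    have hBv := hB.dotProduct_mulVec_le_lambdaMax v
    have hEv := (le_abs_self _).trans (abs_dotProduct_mulVec_le (A - B) v)
    rw [hv, mul_one] at hBv hEv
    rw [← hAv, ← sub_add_cancel A B, add_mulVec, dotProduct_add, add_sub_cancel_right]
    linarith

theorem lambdaStar_eq (hA : A.IsHermitian) :
    lambdaStar hA = √((lambdaMax hA ^ 2 + ‖A‖ ^ 2) / 2) := by
  rw [lambdaStar, hA.trace_mul_self]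

theorem lambdaStar_le_norm (hA : A.IsHermitian) : lambdaStar hA ≤ ‖A‖ := by
  have h : lambdaMax hA ^ 2 ≤ ‖A‖ ^ 2 := sq_le_sq.mpr (hA.abs_lambdaMax_le.trans (le_abs_self _))
  rw [hA.lambdaStar_eq, Real.sqrt_le_iff]
  exact ⟨norm_nonneg _, by linarith⟩

theorem lambdaStar_eq_norm_of_abs_lambdaMax_eq (hA : A.IsHermitian) (h : |lambdaMax hA| = ‖A‖) :
    lambdaStar hA = ‖A‖ := by
  rw [hA.lambdaStar_eq, ← sq_abs, h, add_self_div_two, Real.sqrt_sq (norm_nonneg _)]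

theorem abs_lambdaStar_sub_le (hA : A.IsHermitian) (hB : B.IsHermitian) :
    |lambdaStar hA - lambdaStar hB| ≤ ‖A - B‖ := by
  rw [hA.lambdaStar_eq, hB.lambdaStar_eq]
  refine Real.abs_sqrt_half_sq_add_sq_sub_le ?_ (abs_norm_sub_norm_le A B)
  rw [abs_sub_le_iff]
  exact ⟨by linarith [hA.lambdaMax_le_add hB],
    by linarith [hB.lambdaMax_le_add hA, norm_sub_rev A B]⟩

end IsHermitian

section RankOne

variable {n : Type*} (c : ℝ) (w : n → ℝ)

theorem isHermitian_smul_vecMulVec_self : (c • vecMulVec w w).IsHermitian := by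
  simp [IsHermitian]

theorem frobenius_norm_smul_vecMulVec_self [Fintype n] :
    ‖c • vecMulVec w w‖ = |c| * (w ⬝ᵥ w) := by
  rw [norm_smul, frobenius_norm_vecMulVec_self, Real.norm_eq_abs]

variable [Fintype n] [DecidableEq n]

theorem lambdaStar_smul_vecMulVec_self_le :
    lambdaStar (isHermitian_smul_vecMulVec_self c w) ≤ |c| * (w ⬝ᵥ w) :=
  frobenius_norm_smul_vecMulVec_self c w ▸ (isHermitian_smul_vecMulVec_self c w).lambdaStar_le_norm

theorem lambdaStar_smul_vecMulVec_self_of_nonneg (hc : 0 ≤ c) :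
    lambdaStar (isHermitian_smul_vecMulVec_self c w) = c * (w ⬝ᵥ w) := by
  have hR := isHermitian_smul_vecMulVec_self c w
  have hnorm := frobenius_norm_smul_vecMulVec_self c w
  rw [abs_of_nonneg hc] at hnorm
  rw [← hnorm]
  refine hR.lambdaStar_eq_norm_of_abs_lambdaMax_eq (le_antisymm hR.abs_lambdaMax_le ?_)
  rw [hnorm]
  rcases (dotProduct_self_star_nonneg w).eq_or_lt with hw | hw <;> rw [star_trivial] at hw
  · simp [← hw]
  · have hRw := hR.dotProduct_mulVec_le_lambdaMax w
    rw [smul_mulVec, vecMulVec_mulVec, dotProduct_smul, dotProduct_smul, op_smul_eq_mul,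
      smul_eq_mul, ← mul_assoc] at hRw
    exact (le_of_mul_le_mul_right hRw hw).trans (le_abs_self _)

theorem lambdaStar_smul_vecMulVec_self_of_subsingleton [Subsingleton n] :
    lambdaStar (isHermitian_smul_vecMulVec_self c w) = |c| * (w ⬝ᵥ w) := by
  have hR := isHermitian_smul_vecMulVec_self c w
  rw [← frobenius_norm_smul_vecMulVec_self]
  refine hR.lambdaStar_eq_norm_of_abs_lambdaMax_eq ?_
  rw [hR.lambdaMax_of_subsingleton, trace_smul, trace_vecMulVec,
    frobenius_norm_smul_vecMulVec_self, smul_eq_mul, abs_mul,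
    abs_of_nonneg (a := w ⬝ᵥ w) (by simpa using dotProduct_self_star_nonneg w)]

end RankOne

section Orthogonal

variable {n : Type*} [Fintype n] [DecidableEq n] {U : Matrix n n ℝ}

theorem transpose_mul_diagonal_single_mul (U : Matrix n n ℝ) (i : n) (c : ℝ) :
    Uᵀ * diagonal (Pi.single i c) * U = c • vecMulVec (U i) (U i) := by
  ext j k
  simp [mul_apply, diagonal_apply, Pi.single_apply, vecMulVec_apply]
  ring

theorem frobenius_norm_transpose_mul_diagonal_mul_sub (hU : Uᵀ * U = 1) (d : n → ℝ) (i : n) :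
    ‖Uᵀ * diagonal d * U - d i • vecMulVec (U i) (U i)‖ = √(∑ j ∈ {i}ᶜ, d j ^ 2) := by
  rw [← transpose_mul_diagonal_single_mul, ← sub_mul, ← mul_sub, diagonal_sub,
    frobenius_norm_transpose_mul_mul hU, frobenius_norm_diagonal, EuclideanSpace.norm_eq,
    Fintype.sum_eq_add_sum_compl i]
  simp only [Real.norm_eq_abs, sq_abs]
  rw [Pi.single_eq_same, sub_self, zero_pow two_ne_zero, zero_add]
  refine congrArg _ (Finset.sum_congr rfl fun j hj => ?_)
  rw [Pi.single_eq_of_ne (Finset.notMem_singleton.mp (Finset.mem_compl.mp hj)), sub_zero]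

theorem sum_sq_le_one_of_transpose_mul_self_eq_one (hU : Uᵀ * U = 1) (i : n) (s : Finset n) :
    ∑ k ∈ s, U i k ^ 2 ≤ 1 := by
  have hrow : (U * Uᵀ) i i = 1 := by rw [mul_eq_one_comm.mp hU, one_apply_eq]
  simp only [mul_apply, transpose_apply, ← sq] at hrow
  exact hrow ▸ Finset.sum_le_univ_sum_of_nonneg fun k => sq_nonneg _

theorem abs_lambdaStar_submatrix_sub_lambdaStar_rankOne_le {ι : Type*} [Fintype ι] [DecidableEq ι]
    (hU : Uᵀ * U = 1) {d : n → ℝ} {A : Matrix n n ℝ} (hA : A.IsHermitian)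
    (hAU : A = Uᵀ * diagonal d * U) (i : n) {f : ι → n} (hf : Function.Injective f) :
    |lambdaStar (hA.submatrix f) - lambdaStar (isHermitian_smul_vecMulVec_self (d i) (U i ∘ f))| ≤
      √(∑ j ∈ {i}ᶜ, d j ^ 2) := by
  refine ((hA.submatrix f).abs_lambdaStar_sub_le _).trans ?_
  rw [show A.submatrix f f - d i • vecMulVec (U i ∘ f) (U i ∘ f) =
      (A - d i • vecMulVec (U i) (U i)).submatrix f f from rfl,
    ← frobenius_norm_transpose_mul_diagonal_mul_sub hU, ← hAU]
  exact frobenius_norm_submatrix_le _ hf hf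

end Orthogonal

end Matrix

theorem stmt_12 (m : ℕ) (hm : 1 ≤ m) (lam : Fin m → ℝ)
    (hlam : ∀ i j : Fin m, i ≤ j → lam j ≤ lam i)
    (U : Matrix (Fin m) (Fin m) ℝ) (hU : Uᵀ * U = 1)
    (X : Matrix (Fin m) (Fin m) ℝ) (hXh : X.IsHermitian)
    (hX : X = Uᵀ * Matrix.diagonal lam * U) :
    ∀ β : Finset (Fin m),
      |lambdaStar (hXh.submatrix (fun i : β => (i : Fin m))) -
          |lam ⟨0, hm⟩| * ∑ k ∈ β, (U ⟨0, hm⟩ k) ^ 2| ≤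
        Real.sqrt (∑ i ∈ Finset.Ioi (⟨0, hm⟩ : Fin m), lam i ^ 2) := by
  intro β
  set z : Fin m := ⟨0, hm⟩
  set w : β → ℝ := U z ∘ Subtype.val
  have hw : w ⬝ᵥ w = ∑ k ∈ β, U z k ^ 2 := by
    simp only [dotProduct, w, Function.comp_apply, ← sq]
    exact Finset.sum_coe_sort β (fun k => U z k ^ 2)
  have hcompl : ({z}ᶜ : Finset (Fin m)) = Finset.Ioi z := by
    ext i
    simp [z, Fin.lt_def, Fin.ext_iff]
  have hclose := abs_lambdaStar_submatrix_sub_lambdaStar_rankOne_le hU hXh hX z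
    (Subtype.val_injective (p := (· ∈ β)))
  rw [hcompl, abs_sub_le_iff] at hclose
  have hτ := lambdaStar_smul_vecMulVec_self_le (lam z) w
  have hσ : 0 ≤ lambdaStar (hXh.submatrix (fun i : β => (i : Fin m))) := Real.sqrt_nonneg _
  rw [← hw, abs_sub_le_iff]
  suffices |lam z| * (w ⬝ᵥ w) ≤ lambdaStar (hXh.submatrix (fun i : β => (i : Fin m))) +
      √(∑ i ∈ Finset.Ioi z, lam i ^ 2) by
    constructor <;> linarith
  rcases le_or_gt 0 (lam z) with hL | hL
  · rw [abs_of_nonneg hL, ← lambdaStar_smul_vecMulVec_self_of_nonneg (lam z) w hL]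
    linarith
  obtain rfl | hm2 : m = 1 ∨ 2 ≤ m := by omega
  · rw [← lambdaStar_smul_vecMulVec_self_of_subsingleton]
    linarith
  · have hs := mul_le_of_le_one_right (abs_nonneg (lam z))
      (hw ▸ sum_sq_le_one_of_transpose_mul_self_eq_one hU z β)
    have := abs_le_sqrt_sum_sq_Ioi_of_neg (i := z) (j := ⟨1, hm2⟩) (by simp [z, Fin.lt_def])
      (hlam _ _ (by simp [z, Fin.le_def])) hL
    linarith
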